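/- arXiv:1406.7499 — 3 statements merged into one kernel-verified Lean document; each statement's English description precedes it below -/
import Mathlib

section
/- Let M be a finite dimensional polynomial GL_n-module of degree d over a field k of characteristic p > 0, and let A be a p-nilpotent n×n matrix over k. Then the operator (exp_A)_*(u_r) acts trivially on M whenever p^r > (p-1)d. -/
open TensorProduct Polynomial

lemma stmt12_aux {k : Type} [Field k] {σ : Type} (g : σ → Polynomial k) (e : ℕ)
    (hg : ∀ i, (g i).natDegree ≤ e) {f : MvPolynomial σ k} {d : ℕ}
    (hf : f ∈ MvPolynomial.homogeneousSubmodule σ k d) {N : ℕ} (hN : e * d < N) :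
    ((MvPolynomial.aeval g) f).coeff N = 0 := by
  rw [MvPolynomial.mem_homogeneousSubmodule] at hf
  rw [MvPolynomial.aeval_def, MvPolynomial.eval₂_eq, Polynomial.finset_sum_coeff]
  apply Finset.sum_eq_zero
  intro m hm
  apply Polynomial.coeff_eq_zero_of_natDegree_lt
  have h1 : (∏ i ∈ m.support, g i ^ m i).natDegree ≤ e * d := by
    calc (∏ i ∈ m.support, g i ^ m i).natDegree
        ≤ ∑ i ∈ m.support, (g i ^ m i).natDegree := Polynomial.natDegree_prod_le _ _
      _ ≤ ∑ i ∈ m.support, m i * e := by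
          apply Finset.sum_le_sum
          intro i _
          exact (Polynomial.natDegree_pow_le).trans (Nat.mul_le_mul_left _ (hg i))
      _ = (∑ i ∈ m.support, m i) * e := by rw [Finset.sum_mul]
      _ = e * d := by
          have hd := hf (MvPolynomial.mem_support_iff.mp hm)
          simp only [Finsupp.weight_apply, Finsupp.sum, Pi.one_apply, smul_eq_mul,
            mul_one] at hd
          rw [hd, mul_comm]
  calc (algebraMap k (Polynomial k) (MvPolynomial.coeff m f) *
          ∏ i ∈ m.support, g i ^ m i).natDegree
      ≤ (∏ i ∈ m.support, g i ^ m i).natDegree := Polynomial.natDegree_C_mul_le _ _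
    _ ≤ e * d := h1
    _ < N := hN

/-- Let `M` be a finite dimensional polynomial `GLₙ`-module of degree `d` (a comodule
over the coalgebra `k[Mₙ]_d` of degree-`d` polynomial functions on `n × n` matrices) and
let `A` be a `p`-nilpotent `n × n` matrix.  Then the operator `(exp_A)_*(u_r)` — obtained
by composing the coaction with `exp_A^* : k[Mₙ] → k[T]`, `X_{ij} ↦ (Σ_{s<p} (Tˢ/s!) Aˢ)_{ij}`,
and reading off the coefficient of `T^{pʳ}` — acts as zero on `M` whenever `pʳ > (p-1)d`. -/
theorem stmt12 {p n d : ℕ} [Fact p.Prime] {k : Type} [Field k] [CharP k p]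
    {M : Type} [AddCommGroup M] [Module k M] [FiniteDimensional k M]
    (Δ : M →ₗ[k] M ⊗[k] MvPolynomial (Fin n × Fin n) k)
    (hdeg : ∀ m : M, Δ m ∈ LinearMap.range
      (LinearMap.lTensor M (MvPolynomial.homogeneousSubmodule (Fin n × Fin n) k d).subtype))
    (A : Matrix (Fin n) (Fin n) k) (hA : A ^ p = 0)
    (r : ℕ) (hr : (p - 1) * d < p ^ r) :
    (TensorProduct.rid k M).toLinearMap ∘ₗ
        LinearMap.lTensor M (Polynomial.lcoeff k (p ^ r)) ∘ₗ
        LinearMap.lTensor M (MvPolynomial.aeval fun ij : Fin n × Fin n =>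
          ∑ s ∈ Finset.range p,
            Polynomial.C ((s.factorial : k)⁻¹ * (A ^ s) ij.1 ij.2) *
              (Polynomial.X : Polynomial k) ^ s).toLinearMap ∘ₗ Δ = 0 := by
  set g : Fin n × Fin n → Polynomial k := fun ij =>
    ∑ s ∈ Finset.range p,
      Polynomial.C ((s.factorial : k)⁻¹ * (A ^ s) ij.1 ij.2) *
        (Polynomial.X : Polynomial k) ^ s with hgdef
  have hg : ∀ ij, (g ij).natDegree ≤ p - 1 := by
    intro ij
    apply Polynomial.natDegree_sum_le_of_forall_le
    intro s hs
    calc (Polynomial.C ((s.factorial : k)⁻¹ * (A ^ s) ij.1 ij.2) *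
            (Polynomial.X : Polynomial k) ^ s).natDegree
        ≤ ((Polynomial.X : Polynomial k) ^ s).natDegree := Polynomial.natDegree_C_mul_le _ _
      _ ≤ s := by simp [Polynomial.natDegree_X_pow]
      _ ≤ p - 1 := Nat.le_pred_of_lt (Finset.mem_range.mp hs)
  set F : MvPolynomial (Fin n × Fin n) k →ₗ[k] k :=
    (Polynomial.lcoeff k (p ^ r)) ∘ₗ (MvPolynomial.aeval g).toLinearMap with hF
  have hFz : F ∘ₗ (MvPolynomial.homogeneousSubmodule (Fin n × Fin n) k d).subtype = 0 := by
    apply LinearMap.ext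
    rintro ⟨f, hf⟩
    exact stmt12_aux g (p - 1) hg hf hr
  ext m
  obtain ⟨x, hx⟩ := hdeg m
  simp only [LinearMap.comp_apply, LinearMap.zero_apply]
  rw [← hx]
  simp only [LinearMap.comp_apply, ← LinearMap.lTensor_comp_apply]
  have : (Polynomial.lcoeff k (p ^ r)) ∘ₗ
      ((MvPolynomial.aeval g).toLinearMap ∘ₗ
        (MvPolynomial.homogeneousSubmodule (Fin n × Fin n) k d).subtype) = 0 := by
    rw [← LinearMap.comp_assoc]; exact hFz
  rw [this, LinearMap.lTensor_zero, LinearMap.zero_apply, map_zero]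
end

section
/- Let G be a linear algebraic group over an algebraically closed field k of characteristic p > 0 equipped with a structure of exponential type, and let M be a finite dimensional rational G-module. Then there exists an integer r such that (E_B)_*(u_s) acts trivially on M for all s ≥ r and all p-nilpotent B ∈ N_p(g). -/
open TensorProduct Polynomial

noncomputable section

/-- Comultiplication of the Hopf algebra `k[T]` of `𝔾ₐ`: `T ↦ T ⊗ 1 + 1 ⊗ T`. -/
def comulT (k : Type) [Field k] : Polynomial k →ₗ[k] Polynomial k ⊗[k] Polynomial k :=
  (Polynomial.aeval
    ((X : Polynomial k) ⊗ₜ[k] (1 : Polynomial k) +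
      (1 : Polynomial k) ⊗ₜ[k] (X : Polynomial k))).toLinearMap

/-- Let `G` be a linear algebraic group over an algebraically closed field `k` of
characteristic `p > 0` with coordinate Hopf algebra `H = k[G]`, equipped with a structure
of exponential type `E : N_p(𝔤) × 𝔾ₐ → G`, given on coordinate algebras by a single
algebra map `Eexp : H → C[T]`, where `C = k[N_p(𝔤)]` is the coordinate ring of the
variety of `p`-nilpotent elements; a point `B ∈ N_p(𝔤)(k)` is an algebra map
`ev : C → k`, and `E_B^* = (map ev) ∘ Eexp : H → k[T]` is a morphism of coalgebras.
Then for any finite dimensional rational `G`-module `M` (a `k[G]`-comodule) there is an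
`r` such that for all `s ≥ r` and all `B`, the operator `(E_B)_*(u_s)` — composing the
coaction with `E_B^*` and reading off the coefficient of `T^{pˢ}` — is zero on `M`. -/
theorem stmt14 {p : ℕ} [Fact p.Prime] {k : Type} [Field k] [IsAlgClosed k] [CharP k p]
    {H : Type} [CommRing H] [HopfAlgebra k H]
    {C : Type} [CommRing C] [Algebra k C]
    (Eexp : H →ₐ[k] Polynomial C)
    (hEcoalg : ∀ ev : C →ₐ[k] k,
      comulT k ∘ₗ ((Polynomial.mapAlgHom ev).comp Eexp).toLinearMap =
        TensorProduct.map ((Polynomial.mapAlgHom ev).comp Eexp).toLinearMap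
          ((Polynomial.mapAlgHom ev).comp Eexp).toLinearMap ∘ₗ Coalgebra.comul)
    {M : Type} [AddCommGroup M] [Module k M] [FiniteDimensional k M]
    (Δ : M →ₗ[k] M ⊗[k] H)
    (hcounit : ∀ m : M,
      (TensorProduct.rid k M) (LinearMap.lTensor M (Coalgebra.counit (R := k)) (Δ m)) = m)
    (hcoassoc : LinearMap.lTensor M (Coalgebra.comul (R := k)) ∘ₗ Δ =
      (TensorProduct.assoc k M H H).toLinearMap ∘ₗ LinearMap.rTensor H Δ ∘ₗ Δ) :
    ∃ r : ℕ, ∀ s : ℕ, r ≤ s → ∀ ev : C →ₐ[k] k,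
      (TensorProduct.rid k M).toLinearMap ∘ₗ
          LinearMap.lTensor M (Polynomial.lcoeff k (p ^ s)) ∘ₗ
          LinearMap.lTensor M ((Polynomial.mapAlgHom ev).comp Eexp).toLinearMap ∘ₗ Δ
        = 0 := by
  have key : ∀ x : M ⊗[k] H, ∃ N : ℕ, ∀ s : ℕ, N ≤ s → ∀ ev : C →ₐ[k] k,
      (TensorProduct.rid k M)
        (LinearMap.lTensor M (Polynomial.lcoeff k (p ^ s))
          (LinearMap.lTensor M ((Polynomial.mapAlgHom ev).comp Eexp).toLinearMap x)) = 0 := by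
    intro x
    induction x using TensorProduct.induction_on with
    | zero => exact ⟨0, fun s _ ev => by simp⟩
    | tmul m h =>
        refine ⟨(Eexp h).natDegree + 1, fun s hs ev => ?_⟩
        have h1 : s < p ^ s := Nat.lt_pow_self (Fact.out : p.Prime).one_lt
        have hd : (Eexp h).natDegree < p ^ s := by omega
        simp [Polynomial.lcoeff_apply, Polynomial.coeff_map,
          Polynomial.coeff_eq_zero_of_natDegree_lt hd]
    | add x y hx hy =>
        obtain ⟨N1, h1⟩ := hx
        obtain ⟨N2, h2⟩ := hy
        refine ⟨max N1 N2, fun s hs ev => ?_⟩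
        simp only [map_add, h1 s (le_trans (le_max_left _ _) hs) ev,
          h2 s (le_trans (le_max_right _ _) hs) ev, add_zero]
  set b := Module.finBasis k M with hb
  choose N hN using fun i => key (Δ (b i))
  refine ⟨Finset.univ.sup N, fun s hs ev => ?_⟩
  refine b.ext fun i => ?_
  have : N i ≤ s := le_trans (Finset.le_sup (Finset.mem_univ i)) hs
  simpa using hN i s this ev
end
end

section
/- Let k be an algebraically closed field of characteristic p > 0, let 0 → M_1 → M_2 → M_3 → 0 be a short exact sequence of rational G_a-modules, and let a be a finite sequence in k with associated p-nilpotent operator u = Σ_{s≥0} a_s^{p^s} u_s. If the restrictions of two of the three modules M_1, M_2, M_3 to k[u]/(u^p) are free, then so is the restriction of the third; i.e., each support variety V(G_a)_{M_i} is contained in the union of the support varieties of the other two. -/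
open TensorProduct Polynomial

noncomputable section

/-- The action on a `k[T]`-comodule `M` of the functional `v_j ∈ k𝔾ₐ` reading off the
coefficient of `Tʲ`; it is characterized by `Δ_M(m) = Σ_j v_j(m) ⊗ Tʲ`. -/
def vAct {k : Type} [Field k] {M : Type} [AddCommGroup M] [Module k M]
    (Δ : M →ₗ[k] M ⊗[k] Polynomial k) (j : ℕ) : M →ₗ[k] M :=
  (TensorProduct.rid k M).toLinearMap ∘ₗ LinearMap.lTensor M (Polynomial.lcoeff k j) ∘ₗ Δ

/-- The action of the generator `u_s ∈ k𝔾ₐ = k[u₀,u₁,…]/(uᵢᵖ)` on a `k[T]`-comodule: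
`u_s` reads off the coefficient of `T^{pˢ}`. -/
def uAct {k : Type} [Field k] {M : Type} [AddCommGroup M] [Module k M]
    (Δ : M →ₗ[k] M ⊗[k] Polynomial k) (p s : ℕ) : M →ₗ[k] M :=
  vAct Δ (p ^ s)

/-- The counit axiom for a `k[T]`-comodule (the counit of `k[T]` is evaluation at `0`,
i.e. the coefficient of `T⁰`). -/
def IsCounital {k : Type} [Field k] {M : Type} [AddCommGroup M] [Module k M]
    (Δ : M →ₗ[k] M ⊗[k] Polynomial k) : Prop :=
  ∀ m : M, vAct Δ 0 m = m

/-- The coassociativity axiom for a `k[T]`-comodule. -/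
def IsCoassoc {k : Type} [Field k] {M : Type} [AddCommGroup M] [Module k M]
    (Δ : M →ₗ[k] M ⊗[k] Polynomial k) : Prop :=
  LinearMap.lTensor M (comulT k) ∘ₗ Δ =
    (TensorProduct.assoc k M (Polynomial k) (Polynomial k)).toLinearMap ∘ₗ
      LinearMap.rTensor (Polynomial k) Δ ∘ₗ Δ

/-- The algebra `k[u]/(uᵖ)`. -/
abbrev Kup (k : Type) [Field k] (p : ℕ) : Type :=
  Polynomial k ⧸ Ideal.span {(X : Polynomial k) ^ p}

/-- Multiplication by `u` on `k[u]/(uᵖ)`. -/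
def mulU (k : Type) [Field k] (p : ℕ) : Kup k p →ₗ[k] Kup k p :=
  LinearMap.mulLeft k (Ideal.Quotient.mk _ (X : Polynomial k))

/-- `M` is free as a module over `k[u]/(uᵖ)`, where `u` acts by the `p`-nilpotent
operator `f`: there is a `k`-linear isomorphism of `M` with a direct sum of copies of
`k[u]/(uᵖ)` intertwining `f` with multiplication by `u`. -/
def IsFreeOp (k : Type) [Field k] (p : ℕ) {M : Type} [AddCommGroup M] [Module k M]
    (f : M →ₗ[k] M) : Prop :=
  ∃ (ι : Type) (e : M ≃ₗ[k] (ι →₀ Kup k p)),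
    ∀ m : M, e (f m) = Finsupp.mapRange.linearMap (mulU k p) (e m)

set_option synthInstance.maxHeartbeats 1000000
set_option maxHeartbeats 1000000
set_option linter.unusedSectionVars false
set_option linter.unusedVariables false

section PartA
variable {k : Type} [Field k]
def ext2 (k : Type) [Field k] (i n : ℕ) : Polynomial k ⊗[k] Polynomial k →ₗ[k] k :=
  (TensorProduct.lid k k).toLinearMap ∘ₗ TensorProduct.map (lcoeff k i) (lcoeff k n)

lemma ext2_tmul (i n : ℕ) (P Q : Polynomial k) :
    ext2 k i n (P ⊗ₜ[k] Q) = P.coeff i * Q.coeff n := by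
  simp [ext2, smul_eq_mul]

lemma ext2_comulT_pow (i n d : ℕ) :
    ext2 k i n (comulT k ((X:Polynomial k)^d))
      = ((i+n).choose i : k) * (if i + n = d then 1 else 0) := by
  have h1 : comulT k ((X:Polynomial k)^d)
      = ((X : Polynomial k) ⊗ₜ[k] (1 : Polynomial k) +
      (1 : Polynomial k) ⊗ₜ[k] (X : Polynomial k))^d := by
    simp [comulT]
  rw [h1, add_pow, map_sum]
  have h2 : ∀ m : ℕ, ((X:Polynomial k) ⊗ₜ[k] (1:Polynomial k))^m *
      ((1:Polynomial k) ⊗ₜ[k] (X:Polynomial k))^(d-m) * ((d.choose m : ℕ) : Polynomial k ⊗[k] Polynomial k)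
      = (d.choose m : ℕ) • ((X^m : Polynomial k) ⊗ₜ[k] (X^(d-m) : Polynomial k)) := by
    intro m
    rw [Algebra.TensorProduct.tmul_pow, Algebra.TensorProduct.tmul_pow]
    rw [one_pow, one_pow, Algebra.TensorProduct.tmul_mul_tmul, mul_one, one_mul]
    rw [mul_comm, ← nsmul_eq_mul]
  simp only [h2, map_nsmul, ext2_tmul, coeff_X_pow, smul_eq_mul]
  rw [Finset.sum_eq_single i]
  · by_cases hd : d = i + n
    · subst hd
      have hni : i + n - i = n := by omega
      simp [hni]
    · have hin : (i + n = d) = False := by simp; omega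
      by_cases hid : i ≤ d
      · have : (n = d - i) = False := by simp; omega
        simp [this, hin]
      · have : d.choose i = 0 := Nat.choose_eq_zero_of_lt (by omega)
        simp [this, hin]
  · intro m _ hmi
    simp [Ne.symm hmi]
  · intro hi
    simp only [Finset.mem_range, not_lt] at hi
    have : d.choose i = 0 := Nat.choose_eq_zero_of_lt (by omega)
    simp [this]

lemma ext2_comulT (i n : ℕ) :
    (ext2 k i n) ∘ₗ (comulT k) = ((i+n).choose i : k) • lcoeff k (i+n) := by
  apply Polynomial.lhom_ext'
  intro d
  apply LinearMap.ext; intro c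
  rw [LinearMap.comp_apply, LinearMap.comp_apply, ← smul_X_eq_monomial, map_smul, map_smul,
    ext2_comulT_pow]
  simp only [LinearMap.comp_apply, LinearMap.smul_apply, lcoeff_apply, coeff_monomial]
  by_cases h : i + n = d
  · simp [h, mul_comm]
  · have h2 : ¬ d = i + n := fun hh => h hh.symm
    simp [h, h2]

variable {M N : Type} [AddCommGroup M] [Module k M] [AddCommGroup N] [Module k N]

lemma rid_natural (φ : M →ₗ[k] N) :
    (TensorProduct.rid k N).toLinearMap ∘ₗ LinearMap.rTensor k φ
      = φ ∘ₗ (TensorProduct.rid k M).toLinearMap := by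
  apply TensorProduct.ext'
  intro m c
  simp

lemma vAct_comp (Δ : M →ₗ[k] M ⊗[k] Polynomial k) (h : IsCoassoc Δ) (i n : ℕ) :
    vAct Δ i ∘ₗ vAct Δ n = (((i+n).choose i : k)) • vAct Δ (i+n) := by
  set R := (TensorProduct.rid k M).toLinearMap
  set E : M ⊗[k] (Polynomial k ⊗[k] Polynomial k) →ₗ[k] M :=
    R ∘ₗ LinearMap.lTensor M (ext2 k i n) with hE
  have claim1 : E ∘ₗ (LinearMap.lTensor M (comulT k) ∘ₗ Δ)
      = ((i+n).choose i : k) • vAct Δ (i+n) := by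
    rw [hE, LinearMap.comp_assoc]
    rw [← LinearMap.comp_assoc Δ (LinearMap.lTensor M (comulT k)) (LinearMap.lTensor M (ext2 k i n))]
    rw [← LinearMap.lTensor_comp, ext2_comulT]
    have : LinearMap.lTensor M (((i+n).choose i : k) • lcoeff k (i+n))
        = ((i+n).choose i : k) • LinearMap.lTensor M (lcoeff k (i+n)) := by
      apply TensorProduct.ext'; intro m c; simp
    rw [this]
    rw [vAct]
    ext m
    simp
    rfl
  have claim2 : E ∘ₗ ((TensorProduct.assoc k M (Polynomial k) (Polynomial k)).toLinearMap ∘ₗ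
      LinearMap.rTensor (Polynomial k) Δ ∘ₗ Δ) = vAct Δ i ∘ₗ vAct Δ n := by
    have hEassoc : E ∘ₗ (TensorProduct.assoc k M (Polynomial k) (Polynomial k)).toLinearMap
        = ((TensorProduct.rid k M).toLinearMap ∘ₗ LinearMap.lTensor M (lcoeff k n)) ∘ₗ
          LinearMap.rTensor (Polynomial k)
            ((TensorProduct.rid k M).toLinearMap ∘ₗ LinearMap.lTensor M (lcoeff k i)) := by
      apply TensorProduct.ext_threefold
      intro x y z
      simp [hE, ext2_tmul, R, smul_smul, mul_comm]
    rw [← LinearMap.comp_assoc, ← LinearMap.comp_assoc, hEassoc]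
    rw [LinearMap.comp_assoc, LinearMap.comp_assoc]
    rw [← LinearMap.comp_assoc Δ (LinearMap.rTensor (Polynomial k) Δ)
      (LinearMap.rTensor (Polynomial k) ((TensorProduct.rid k M).toLinearMap ∘ₗ LinearMap.lTensor M (lcoeff k i)))]
    rw [← LinearMap.rTensor_comp]
    have hv : ((TensorProduct.rid k M).toLinearMap ∘ₗ LinearMap.lTensor M (lcoeff k i)) ∘ₗ Δ = vAct Δ i := by
      rw [vAct, LinearMap.comp_assoc]
    rw [hv]
    have hswap : ((TensorProduct.rid k M).toLinearMap ∘ₗ LinearMap.lTensor M (lcoeff k n)) ∘ₗ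
        LinearMap.rTensor (Polynomial k) (vAct Δ i)
        = vAct Δ i ∘ₗ ((TensorProduct.rid k M).toLinearMap ∘ₗ LinearMap.lTensor M (lcoeff k n)) := by
      apply TensorProduct.ext'
      intro m c
      simp [R, vAct]
    rw [← LinearMap.comp_assoc Δ (LinearMap.rTensor (Polynomial k) (vAct Δ i))
      ((TensorProduct.rid k M).toLinearMap ∘ₗ LinearMap.lTensor M (lcoeff k n)), hswap]
    rw [LinearMap.comp_assoc]
    congr 1
  rw [← claim1, h, claim2]

lemma vAct_pow_smul (Δ : M →ₗ[k] M ⊗[k] Polynomial k) (h : IsCoassoc Δ) (b : ℕ) :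
    ∀ j : ℕ, 1 ≤ j → ∃ c : ℕ, (vAct Δ b)^j = (c:k) • vAct Δ (j * b) := by
  intro j hj
  induction j with
  | zero => omega
  | succ j ih =>
    rcases Nat.eq_zero_or_pos j with hj0 | hj1
    · subst hj0
      exact ⟨1, by simp⟩
    · obtain ⟨c, hc⟩ := ih hj1
      refine ⟨c * ((b + j*b).choose b), ?_⟩
      rw [pow_succ', Module.End.mul_eq_comp, hc, LinearMap.comp_smul, vAct_comp Δ h b (j*b)]
      rw [smul_smul, Nat.cast_mul]
      have h1 : b + j * b = (j + 1) * b := by ring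
      rw [h1]

lemma vAct_pow_nilpotent {p : ℕ} [Fact p.Prime] [CharP k p]
    (Δ : M →ₗ[k] M ⊗[k] Polynomial k) (h : IsCoassoc Δ) (s : ℕ) :
    (vAct Δ (p^s))^p = 0 := by
  have hp2 := (Fact.out : p.Prime).two_le
  obtain ⟨c, hc⟩ := vAct_pow_smul Δ h (p^s) (p-1) (by omega)
  have hpp : p = (p-1) + 1 := by omega
  set b := p^s with hb
  conv_lhs => rw [hpp]
  rw [pow_succ', Module.End.mul_eq_comp, hc, LinearMap.comp_smul,
    vAct_comp Δ h b ((p-1) * b)]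
  rw [smul_smul]
  have hdvd : p ∣ (b + (p-1) * b).choose b := by
    have he : b + (p-1) * b = p^(s+1) := by
      have h1 : b + (p-1) * b = ((p-1)+1) * b := by ring
      rw [h1, (by omega : (p-1)+1 = p), hb, pow_succ, mul_comm]
    rw [he]
    refine (Fact.out : p.Prime).dvd_choose_pow (by positivity) ?_
    have : p^s < p^(s+1) := by
      exact Nat.pow_lt_pow_succ (by omega)
    omega
  have : ((b + (p-1) * b).choose b : k) = 0 := by
    exact (CharP.cast_eq_zero_iff k p _).2 hdvd
  rw [this, mul_zero, zero_smul]

lemma vAct_commute (Δ : M →ₗ[k] M ⊗[k] Polynomial k) (h : IsCoassoc Δ) (i n : ℕ) :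
    Commute (vAct Δ i) (vAct Δ n) := by
  show _ * _ = _ * _
  rw [Module.End.mul_eq_comp, Module.End.mul_eq_comp, vAct_comp Δ h i n, vAct_comp Δ h n i,
    add_comm n i]
  congr 2
  have := Nat.choose_symm (Nat.le_add_right i n)
  rw [← this]
  congr 1
  omega

lemma vAct_map (Δ : M →ₗ[k] M ⊗[k] Polynomial k) (Δ' : N →ₗ[k] N ⊗[k] Polynomial k)
    (φ : M →ₗ[k] N) (h : LinearMap.rTensor (Polynomial k) φ ∘ₗ Δ = Δ' ∘ₗ φ) (j : ℕ) :
    vAct Δ' j ∘ₗ φ = φ ∘ₗ vAct Δ j := by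
  rw [vAct, vAct, LinearMap.comp_assoc, LinearMap.comp_assoc, ← h]
  rw [← LinearMap.comp_assoc Δ (LinearMap.rTensor (Polynomial k) φ) (LinearMap.lTensor N (lcoeff k j))]
  rw [LinearMap.lTensor_comp_rTensor, ← LinearMap.rTensor_comp_lTensor]
  rw [← LinearMap.comp_assoc, ← LinearMap.comp_assoc, rid_natural]
  rw [LinearMap.comp_assoc, LinearMap.comp_assoc]

lemma charP_end [Nontrivial M] (p : ℕ) [CharP k p] : CharP (Module.End k M) p := by
  refine charP_of_injective_algebraMap (R := k) (A := Module.End k M) ?_ p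
  intro c d hcd
  obtain ⟨m, hm⟩ := exists_ne (0 : M)
  have : c • m = d • m := by
    have h1 := congrArg (fun g : Module.End k M => g m) hcd
    simpa [Module.algebraMap_end_apply] using h1
  exact smul_left_injective k hm this

lemma sum_pow_commute {p : ℕ} [Fact p.Prime] [CharP (Module.End k M) p]
    (A : Finset ℕ) (g : ℕ → Module.End k M)
    (hc : ∀ s ∈ A, ∀ t ∈ A, Commute (g s) (g t)) :
    (∑ s ∈ A, g s)^p = ∑ s ∈ A, (g s)^p := by
  induction A using Finset.induction_on with
  | empty => simp; exact zero_pow (Fact.out : p.Prime).ne_zero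
  | @insert a A ha ih =>
    rw [Finset.sum_insert ha, Finset.sum_insert ha]
    rw [add_pow_char_of_commute (R := Module.End k M) p]
    · rw [ih (fun s hs t ht => hc s (Finset.mem_insert_of_mem hs) t (Finset.mem_insert_of_mem ht))]
    · exact Commute.sum_right A g (g a) (fun t ht =>
        hc a (Finset.mem_insert_self a A) t (Finset.mem_insert_of_mem ht))

lemma uSum_pow_zero {p : ℕ} [Fact p.Prime] [CharP k p]
    (Δ : M →ₗ[k] M ⊗[k] Polynomial k) (h : IsCoassoc Δ) (a : ℕ →₀ k) :
    (∑ s ∈ a.support, a s ^ p ^ s • vAct Δ (p^s) : M →ₗ[k] M)^p = 0 := by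
  by_cases hM : Subsingleton M
  · exact Subsingleton.elim _ _
  · haveI : Nontrivial M := not_subsingleton_iff_nontrivial.mp hM
    haveI : CharP (Module.End k M) p := charP_end p
    have hcomm : ∀ s ∈ a.support, ∀ t ∈ a.support,
        Commute ((a s ^ p ^ s • vAct Δ (p^s) : M →ₗ[k] M))
          ((a t ^ p ^ t • vAct Δ (p^t) : M →ₗ[k] M)) := by
      intro s _ t _
      exact ((vAct_commute Δ h (p^s) (p^t)).smul_left _).smul_right _
    rw [sum_pow_commute a.support _ hcomm]
    apply Finset.sum_eq_zero
    intro s _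
    rw [_root_.smul_pow, vAct_pow_nilpotent Δ h s, smul_zero]

end PartA

section PartB
variable {k : Type} [Field k] {p : ℕ} [Fact p.Prime]

lemma Xp_ne_zero : ((X : Polynomial k)^p) ≠ 0 := pow_ne_zero p X_ne_zero

/-- the power basis of `k[u]/(uᵖ)`. -/
def Bp (k : Type) [Field k] (p : ℕ) [Fact p.Prime] : Module.Basis (Fin p) k (Kup k p) :=
  ((AdjoinRoot.powerBasis (Xp_ne_zero (k := k) (p := p))).basis).reindex
    (finCongr (by rw [AdjoinRoot.powerBasis_dim, natDegree_X_pow]))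

lemma Bp_apply (j : Fin p) :
    Bp k p j = Ideal.Quotient.mk _ ((X : Polynomial k)^(j : ℕ)) := by
  rw [Bp]
  erw [Module.Basis.reindex_apply, PowerBasis.basis_eq_pow, AdjoinRoot.powerBasis_gen]
  simp only [finCongr_symm, finCongr_apply, Fin.coe_cast]
  rw [AdjoinRoot.root, ← map_pow]
  rfl

lemma mulU_pow_apply (m : ℕ) (P : Polynomial k) :
    ((mulU k p)^m) (Ideal.Quotient.mk _ P) = Ideal.Quotient.mk _ ((X : Polynomial k)^m * P) := by
  induction m generalizing P with
  | zero => simp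
  | succ m ih =>
    rw [pow_succ, Module.End.mul_apply]
    have h1 : mulU k p (Ideal.Quotient.mk _ P) = Ideal.Quotient.mk _ ((X : Polynomial k) * P) := by
      rw [mulU, LinearMap.mulLeft_apply, ← map_mul]
    rw [h1, ih]
    congr 1
    ring

lemma ker_mulU_pow (m : ℕ) (hm : m ≤ p) :
    LinearMap.ker ((mulU k p)^m) = LinearMap.range ((mulU k p)^(p-m)) := by
  ext x
  obtain ⟨P, rfl⟩ := Ideal.Quotient.mk_surjective x
  constructor
  · intro hx
    rw [LinearMap.mem_ker, mulU_pow_apply, Ideal.Quotient.eq_zero_iff_mem,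
      Ideal.mem_span_singleton] at hx
    have hdvd : (X : Polynomial k)^(p-m) ∣ P := by
      have h1 : (X:Polynomial k)^p = X^m * X^(p-m) := by
        rw [← pow_add]; congr 1; omega
      rw [h1] at hx
      exact (mul_dvd_mul_iff_left (pow_ne_zero m (X_ne_zero (R := k)))).mp hx
    obtain ⟨Q, hQ⟩ := hdvd
    refine ⟨Ideal.Quotient.mk _ Q, ?_⟩
    rw [mulU_pow_apply, ← hQ]
  · rintro ⟨y, hy⟩
    obtain ⟨Q, rfl⟩ := Ideal.Quotient.mk_surjective y
    rw [LinearMap.mem_ker, ← hy, mulU_pow_apply, mulU_pow_apply, Ideal.Quotient.eq_zero_iff_mem,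
      Ideal.mem_span_singleton]
    refine ⟨Q, ?_⟩
    rw [← mul_assoc, ← pow_add]
    congr 2
    omega

variable {M : Type} [AddCommGroup M] [Module k M]

lemma mapRange_linearMap_pow {ι : Type} (g : Kup k p →ₗ[k] Kup k p) (m : ℕ) :
    (Finsupp.mapRange.linearMap (α := ι) g)^m = Finsupp.mapRange.linearMap (g^m) := by
  induction m with
  | zero =>
    rw [pow_zero, pow_zero, Module.End.one_eq_id, Module.End.one_eq_id,
      Finsupp.mapRange.linearMap_id]
  | succ m ih =>
    rw [pow_succ, pow_succ, ih, Module.End.mul_eq_comp, Module.End.mul_eq_comp,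
      ← Finsupp.mapRange.linearMap_comp]

lemma range_mapRange {ι : Type} (h : Kup k p →ₗ[k] Kup k p) (w : ι →₀ Kup k p)
    (hw : ∀ i, w i ∈ LinearMap.range h) :
    w ∈ LinearMap.range (Finsupp.mapRange.linearMap (α := ι) h) := by
  haveI : Module.Projective k ↥(LinearMap.range h) := Module.Projective.of_free
  obtain ⟨σ, hσ⟩ := LinearMap.exists_rightInverse_of_surjective
    (h.rangeRestrict) (LinearMap.range_rangeRestrict h)
  classical
  set σ0 : Kup k p → Kup k p := fun c =>
    if hc : c ∈ LinearMap.range h then σ ⟨c, hc⟩ else 0 with hσ0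
  have hz : σ0 0 = 0 := by
    rw [hσ0]
    simp only [dif_pos (Submodule.zero_mem _)]
    have : (⟨0, Submodule.zero_mem _⟩ : LinearMap.range h) = 0 := rfl
    rw [this, map_zero]
  refine ⟨Finsupp.mapRange σ0 hz w, ?_⟩
  ext i
  rw [Finsupp.mapRange.linearMap_apply, Finsupp.mapRange_apply, Finsupp.mapRange_apply]
  rw [hσ0]
  simp only [dif_pos (hw i)]
  have := congrArg (fun g => g ⟨w i, hw i⟩) hσ
  simp only [LinearMap.comp_apply, LinearMap.id_apply] at this
  have h2 : h (σ ⟨w i, hw i⟩) = ((h.rangeRestrict) (σ ⟨w i, hw i⟩) : Kup k p) := rfl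
  rw [h2, this]

lemma freeOp_ker_range {f : M →ₗ[k] M} (hf : IsFreeOp k p f) (m : ℕ) (hm : m ≤ p) :
    LinearMap.ker (f^m) = LinearMap.range (f^(p-m)) := by
  obtain ⟨ι, e, he⟩ := hf
  have he' : ∀ (j : ℕ) (x : M), e (((f^j)) x) = ((Finsupp.mapRange.linearMap (mulU k p))^j) (e x) := by
    intro j
    induction j with
    | zero => simp
    | succ j ih =>
      intro x
      rw [pow_succ, Module.End.mul_apply, ih, he, pow_succ, Module.End.mul_apply]
  ext x
  rw [LinearMap.mem_ker]
  constructor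
  · intro hx
    have h1 : ((Finsupp.mapRange.linearMap (mulU k p) : (ι →₀ Kup k p) →ₗ[k] _)^m) (e x) = 0 := by
      rw [← he', hx, map_zero]
    rw [mapRange_linearMap_pow] at h1
    have h2 : ∀ i, (e x) i ∈ LinearMap.range ((mulU k p)^(p-m)) := by
      intro i
      rw [← ker_mulU_pow m hm, LinearMap.mem_ker]
      have := congrArg (fun w => w i) h1
      simpa using this
    obtain ⟨y, hy⟩ := range_mapRange ((mulU k p)^(p-m)) (e x) h2
    refine ⟨e.symm y, ?_⟩
    apply e.injective
    rw [he', e.apply_symm_apply, mapRange_linearMap_pow, hy]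
  · rintro ⟨y, rfl⟩
    rw [← Module.End.mul_apply, ← pow_add]
    have hpm : m + (p - m) = p := by omega
    rw [hpm]
    apply e.injective
    rw [he', map_zero, mapRange_linearMap_pow]
    ext i
    simp only [Finsupp.mapRange.linearMap_apply, Finsupp.mapRange_apply,
      Finsupp.coe_zero, Pi.zero_apply]
    obtain ⟨P, hP⟩ := Ideal.Quotient.mk_surjective ((e y) i)
    rw [← hP, mulU_pow_apply, Ideal.Quotient.eq_zero_iff_mem, Ideal.mem_span_singleton]
    exact ⟨P, rfl⟩
    
lemma freeOp_pow_zero {f : M →ₗ[k] M} (hf : IsFreeOp k p f) : f^p = 0 := by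
  have h := freeOp_ker_range hf p le_rfl
  rw [Nat.sub_self, pow_zero] at h
  apply LinearMap.ext; intro x
  have hx : x ∈ LinearMap.ker (f^p) := by rw [h]; exact ⟨x, rfl⟩
  simpa using hx

end PartB

section PartC
variable {k : Type} [Field k] {p : ℕ} [Fact p.Prime]
variable {M : Type} [AddCommGroup M] [Module k M]

lemma pow_apply_zero_of_ge {f : M →ₗ[k] M} (hfp : f^p = 0) {n : ℕ} (hn : p ≤ n) (x : M) :
    (f^n) x = 0 := by
  have h1 : f^n = f^(n-p) * f^p := by rw [← pow_add]; congr 1; omega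
  rw [h1, Module.End.mul_apply, hfp]
  simp

lemma sum_split0 {α : Type} [AddCommMonoid α] {n : ℕ} (hn : 1 ≤ n) (F : ℕ → α) :
    ∑ j ∈ Finset.range n, F j = (∑ j ∈ Finset.range (n-1), F (j+1)) + F 0 := by
  obtain ⟨m, rfl⟩ : ∃ m, n = m + 1 := ⟨n-1, by omega⟩
  simp [Finset.sum_range_succ']

lemma sum_splitTop {α : Type} [AddCommMonoid α] {n : ℕ} (hn : 1 ≤ n) (F : ℕ → α) :
    ∑ j ∈ Finset.range n, F j = (∑ j ∈ Finset.range (n-1), F j) + F (n-1) := by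
  obtain ⟨m, rfl⟩ : ∃ m, n = m + 1 := ⟨n-1, by omega⟩
  simp [Finset.sum_range_succ]

section core
variable {W : Submodule k M} {f : M →ₗ[k] M}

lemma core_indep (hfp : f^p = 0) (hW : IsCompl (LinearMap.ker (f^(p-1))) W)
    (g : ℕ → W) (hg : ∑ j ∈ Finset.range p, (f^j) (g j : M) = 0) :
    ∀ j, j < p → g j = 0 := by
  have hp2 := (Fact.out : p.Prime).two_le
  suffices h : ∀ t, t ≤ p → ∀ j, j < t → g j = 0 by
    intro j hj; exact h p le_rfl j hj
  intro t
  induction t with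
  | zero => omega
  | succ t ih =>
    intro ht j hj
    rcases Nat.lt_or_ge j t with hjt | hjt
    · exact ih (by omega) j hjt
    · have hjeq : j = t := by omega
      subst hjeq
      -- apply f^(p-1-j) to hg
      have h0 := congrArg (fun x => (f^(p-1-j)) x) hg
      simp only [map_zero] at h0
      rw [map_sum] at h0
      have hterm : ∀ i ∈ Finset.range p, i ≠ j →
          (f^(p-1-j)) ((f^i) (g i : M)) = 0 := by
        intro i hi hij
        rcases Nat.lt_or_ge i j with hij' | hij'
        · rw [ih (by omega) i hij']
          simp
        · have : j < i := by omega
          rw [← Module.End.mul_apply, ← pow_add]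
          exact pow_apply_zero_of_ge hfp (by omega) _
      rw [Finset.sum_eq_single j] at h0
      · rw [← Module.End.mul_apply, ← pow_add] at h0
        have hexp : p - 1 - j + j = p - 1 := by omega
        rw [hexp] at h0
        have hmem : (g j : M) ∈ LinearMap.ker (f^(p-1)) ⊓ W :=
          ⟨h0, (g j).2⟩
        rw [hW.inf_eq_bot] at hmem
        exact Subtype.ext hmem
      · exact hterm
      · intro hj'
        exact absurd (Finset.mem_range.mpr (by omega)) hj'

lemma core_span (hfp : f^p = 0) (hW : IsCompl (LinearMap.ker (f^(p-1))) W)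
    (hk : LinearMap.ker f ≤ LinearMap.range (f^(p-1))) :
    ∀ t, t ≤ p → ∀ x : M, (f^t) x = 0 →
      ∃ g : ℕ → W, (∀ j, j < p - t → g j = 0) ∧ x = ∑ j ∈ Finset.range p, (f^j) (g j : M) := by
  have hp2 := (Fact.out : p.Prime).two_le
  intro t
  induction t with
  | zero =>
    intro _ x hx
    rw [pow_zero, Module.End.one_apply] at hx
    exact ⟨0, fun j _ => rfl, by simp [hx]⟩
  | succ t ih =>
    intro ht x hx
    have h1 : (f^t) (f x) = 0 := by
      rw [← Module.End.mul_apply, ← pow_succ]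
      exact hx
    obtain ⟨g, hg0, hgsum⟩ := ih (by omega) (f x) h1
    set y : M := ∑ j ∈ Finset.range (p-1), (f^j) (g (j+1) : M) with hy
    have hfy : f y = f x := by
      rw [hy, map_sum, hgsum]
      rw [sum_split0 (by omega) (fun j => (f^j) (g j : M))]
      have hg00 : g 0 = 0 := hg0 0 (by omega)
      rw [hg00]
      simp only [ZeroMemClass.coe_zero, map_zero, add_zero]
      apply Finset.sum_congr rfl
      intro j _
      rw [pow_succ', Module.End.mul_apply]
    have hker : x - y ∈ LinearMap.ker f := by
      rw [LinearMap.mem_ker, map_sub, hfy, sub_self]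
    obtain ⟨z, hz⟩ := hk hker
    -- decompose z = c + w with c ∈ ker f^(p-1), w ∈ W
    obtain ⟨c, w, hc, hw, hzcw⟩ := Submodule.codisjoint_iff_exists_add_eq.mp hW.codisjoint z
    have hfz : (f^(p-1)) z = (f^(p-1)) w := by
      rw [← hzcw, map_add]
      rw [LinearMap.mem_ker.mp hc, zero_add]
    refine ⟨fun j => if j = p - 1 then ⟨w, hw⟩ else if j + 1 < p then g (j+1) else 0, ?_, ?_⟩
    · intro j hj
      have h1 : j ≠ p - 1 := by omega
      have h2 : j + 1 < p := by omega
      simp only [h1, if_false, h2, if_true]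
      exact hg0 (j+1) (by omega)
    · rw [sum_splitTop (by omega)
        (fun j => (f^j) ((if j = p - 1 then (⟨w, hw⟩ : W) else if j + 1 < p then g (j+1) else 0 : W) : M))]
      have hcoe : ((if p - 1 = p - 1 then (⟨w, hw⟩ : W) else if (p-1) + 1 < p then g ((p-1)+1) else 0 : W) : M) = w := by
        rw [if_pos rfl]
      rw [hcoe]
      have hinner : ∀ j ∈ Finset.range (p-1),
          (f^j) ((if j = p - 1 then (⟨w, hw⟩ : W) else if j + 1 < p then g (j+1) else 0 : W) : M)
          = (f^j) (g (j+1) : M) := by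
        intro j hj
        rw [Finset.mem_range] at hj
        have h1 : j ≠ p - 1 := by omega
        have h2 : j + 1 < p := by omega
        simp only [h1, if_false, h2, if_true]
      rw [Finset.sum_congr rfl hinner, ← hy, ← hfz, hz]
      abel
end core

end PartC


section Construct
variable {k : Type} [Field k] {p : ℕ} [Fact p.Prime]
variable {M : Type} [AddCommGroup M] [Module k M]

lemma isFreeOp_of_ker_le_range {f : M →ₗ[k] M} (hfp : f^p = 0)
    (hk : LinearMap.ker f ≤ LinearMap.range (f^(p-1))) : IsFreeOp k p f := by
  classical
  have hp2 := (Fact.out : p.Prime).two_le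
  obtain ⟨W, hW⟩ := Submodule.exists_isCompl (LinearMap.ker (f^(p-1)))
  let b : Module.Basis (Module.Basis.ofVectorSpaceIndex k W) k W := Module.Basis.ofVectorSpace k W
  set ι := Module.Basis.ofVectorSpaceIndex k W with hι
  -- the "evaluation at m" map
  set χ : M → (Kup k p →ₗ[k] M) := fun m => (Bp k p).constr k (fun j => (f^(j:ℕ)) m) with hχ
  have hχ_basis : ∀ (m : M) (j : Fin p), χ m (Bp k p j) = (f^(j:ℕ)) m := by
    intro m j
    rw [hχ]
    exact Module.Basis.constr_basis _ _ _ _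
  have hχ_mul : ∀ (m : M) (c : Kup k p), χ m (mulU k p c) = f (χ m c) := by
    intro m
    suffices h : (χ m) ∘ₗ mulU k p = f ∘ₗ (χ m) by
      intro c
      exact LinearMap.congr_fun h c
    apply Module.Basis.ext (Bp k p)
    intro j
    rw [LinearMap.comp_apply, LinearMap.comp_apply, hχ_basis]
    have h1 : mulU k p (Bp k p j) = Ideal.Quotient.mk _ ((X : Polynomial k)^((j:ℕ)+1)) := by
      rw [Bp_apply, mulU, LinearMap.mulLeft_apply, ← map_mul]
      congr 1
      ring
    rw [h1]
    by_cases hj : (j:ℕ) + 1 < p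
    · have h2 : Ideal.Quotient.mk (Ideal.span {(X:Polynomial k)^p}) ((X : Polynomial k)^((j:ℕ)+1))
          = Bp k p ⟨(j:ℕ)+1, hj⟩ := by
        rw [Bp_apply]
      rw [h2, hχ_basis, ← Module.End.mul_apply, ← pow_succ']
    · have hj1 : (j:ℕ)+1 = p := by omega
      rw [hj1]
      have h3 : Ideal.Quotient.mk (Ideal.span {(X:Polynomial k)^p}) ((X:Polynomial k)^p) = 0 := by
        rw [Ideal.Quotient.eq_zero_iff_mem]
        exact Ideal.subset_span rfl
      rw [h3, map_zero, ← Module.End.mul_apply, ← pow_succ', hj1, hfp]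
      rfl
  set Φ : (ι →₀ Kup k p) →ₗ[k] M := Finsupp.lsum k (fun i => χ (b i : M)) with hΦ
  have hΦ_single : ∀ (i : ι) (c : Kup k p), Φ (Finsupp.single i c) = χ (b i : M) c := by
    intro i c
    rw [hΦ]
    exact Finsupp.lsum_single _ _ _ _
  have hinter : ∀ z, Φ (Finsupp.mapRange.linearMap (mulU k p) z) = f (Φ z) := by
    suffices h : Φ ∘ₗ Finsupp.mapRange.linearMap (mulU k p) = f ∘ₗ Φ from
      fun z => LinearMap.congr_fun h z
    apply Finsupp.lhom_ext
    intro i c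
    rw [LinearMap.comp_apply, LinearMap.comp_apply, Finsupp.mapRange.linearMap_apply,
      Finsupp.mapRange_single, hΦ_single, hΦ_single, hχ_mul]
  have hsurj : Function.Surjective Φ := by
    intro x
    have hxp : (f^p) x = 0 := by rw [hfp]; rfl
    obtain ⟨g, hg0, hgsum⟩ := core_span hfp hW hk p le_rfl x hxp
    have hterm : ∀ j, j < p → ∀ w : W, (f^j) (w : M) ∈ LinearMap.range Φ := by
      intro j hj w
      have hS : (⊤ : Submodule k W) ≤
          Submodule.comap ((f^j) ∘ₗ W.subtype) (LinearMap.range Φ) := by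
        rw [← b.span_eq]
        apply Submodule.span_le.mpr
        rintro _ ⟨i, rfl⟩
        simp only [SetLike.mem_coe, Submodule.mem_comap, LinearMap.comp_apply,
          Submodule.coe_subtype]
        exact ⟨Finsupp.single i (Bp k p ⟨j, hj⟩), by rw [hΦ_single, hχ_basis]⟩
      have h2 := hS (Submodule.mem_top : w ∈ (⊤ : Submodule k W))
      simpa using h2
    have : x ∈ LinearMap.range Φ := by
      rw [hgsum]
      apply Submodule.sum_mem
      intro j hj
      exact hterm j (Finset.mem_range.mp hj) (g j)
    exact this
  have hinj : Function.Injective Φ := by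
    rw [← LinearMap.ker_eq_bot]
    apply LinearMap.ker_eq_bot'.mpr
    intro x hx
    set G : ℕ → W := fun j =>
      if hj : j < p then ∑ i ∈ x.support, ((Bp k p).equivFun (x i)) ⟨j, hj⟩ • b i else 0 with hG
    have hΦx : Φ x = ∑ j ∈ Finset.range p, (f^j) (G j : M) := by
      have s1 : Φ x = ∑ i ∈ x.support, χ (b i : M) (x i) := by
        rw [hΦ]
        rw [Finsupp.lsum_apply]
        rfl
      have s2 : ∀ i, χ (b i : M) (x i)
          = ∑ j : Fin p, ((Bp k p).equivFun (x i)) j • (f^(j:ℕ)) (b i : M) := by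
        intro i
        rw [hχ]
        exact Module.Basis.constr_apply_fintype _ _ _ _
      rw [s1]
      simp only [s2]
      rw [Finset.sum_comm]
      rw [← Fin.sum_univ_eq_sum_range (fun j => (f^j) (G j : M))]
      apply Finset.sum_congr rfl
      intro j _
      have h4 : G (j:ℕ) = ∑ i ∈ x.support, ((Bp k p).equivFun (x i)) j • b i := by
        rw [hG]
        simp only [dif_pos j.2, Fin.eta]
      rw [h4]
      rw [Submodule.coe_sum]
      rw [map_sum]
      apply Finset.sum_congr rfl
      intro i _
      rw [SetLike.val_smul, map_smul]
    have hG0 := core_indep hfp hW G (by rw [← hΦx, hx])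
    have hco : ∀ (j : Fin p), ∀ i ∈ x.support, ((Bp k p).equivFun (x i)) j = 0 := by
      intro j
      have h1 : G (j:ℕ) = 0 := hG0 _ j.2
      rw [hG] at h1
      simp only [dif_pos j.2, Fin.eta] at h1
      exact linearIndependent_iff'.mp b.linearIndependent x.support _ h1
    apply Finsupp.ext
    intro i
    by_cases hi : i ∈ x.support
    · have h5 : (Bp k p).equivFun (x i) = 0 := by
        funext j
        exact hco j i hi
      have h6 := (Bp k p).equivFun.map_eq_zero_iff.mp h5
      exact h6
    · simpa [Finsupp.notMem_support_iff] using hi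
  let eqv := LinearEquiv.ofBijective Φ ⟨hinj, hsurj⟩
  refine ⟨ι, eqv.symm, ?_⟩
  intro m
  apply eqv.injective
  rw [eqv.apply_symm_apply]
  have h7 : eqv (Finsupp.mapRange.linearMap (mulU k p) (eqv.symm m))
      = Φ (Finsupp.mapRange.linearMap (mulU k p) (eqv.symm m)) := rfl
  rw [h7, hinter]
  have h8 : Φ (eqv.symm m) = eqv (eqv.symm m) := rfl
  rw [h8, eqv.apply_symm_apply]
end Construct


section MainAux
variable {k : Type} [Field k] {p : ℕ} [Fact p.Prime]
variable {M N : Type} [AddCommGroup M] [Module k M] [AddCommGroup N] [Module k N]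

lemma pow_intertwine (φ : M →ₗ[k] N) (uM : M →ₗ[k] M) (uN : N →ₗ[k] N)
    (h : ∀ x, uN (φ x) = φ (uM x)) : ∀ (j : ℕ) (x : M), (uN^j) (φ x) = φ ((uM^j) x) := by
  intro j
  induction j with
  | zero => intro x; simp
  | succ j ih =>
    intro x
    rw [pow_succ, Module.End.mul_apply, h, ih, pow_succ, Module.End.mul_apply]

lemma opSum_intertwine [CharP k p]
    (Δ : M →ₗ[k] M ⊗[k] Polynomial k) (Δ' : N →ₗ[k] N ⊗[k] Polynomial k)
    (φ : M →ₗ[k] N) (h : LinearMap.rTensor (Polynomial k) φ ∘ₗ Δ = Δ' ∘ₗ φ) (a : ℕ →₀ k) (x : M) :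
    (∑ s ∈ a.support, a s ^ p ^ s • uAct Δ' p s) (φ x)
      = φ ((∑ s ∈ a.support, a s ^ p ^ s • uAct Δ p s) x) := by
  rw [LinearMap.coe_sum, Finset.sum_apply, LinearMap.coe_sum, Finset.sum_apply, map_sum]
  apply Finset.sum_congr rfl
  intro s _
  rw [LinearMap.smul_apply, LinearMap.smul_apply, map_smul]
  congr 1
  have h1 := LinearMap.congr_fun (vAct_map Δ Δ' φ h (p^s)) x
  simpa [uAct] using h1
end MainAux

/-- For a short exact sequence `0 → M₁ → M₂ → M₃ → 0` of rational `𝔾ₐ`-modules and a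
finite sequence `a` in `k` with associated `p`-nilpotent operators
`uᵢ = Σ_s a_s^{pˢ} u_s` on `Mᵢ`:  if the restrictions of two of the three modules to
`k[u]/(uᵖ)` are free, then so is the restriction of the third.  Hence each support
variety `V(𝔾ₐ)_{Mᵢ}` is contained in the union of the other two. -/
theorem stmt18 {p : ℕ} [Fact p.Prime] {k : Type} [Field k] [IsAlgClosed k] [CharP k p]
    {M₁ M₂ M₃ : Type} [AddCommGroup M₁] [Module k M₁] [AddCommGroup M₂] [Module k M₂]
    [AddCommGroup M₃] [Module k M₃]
    (Δ₁ : M₁ →ₗ[k] M₁ ⊗[k] Polynomial k) (Δ₂ : M₂ →ₗ[k] M₂ ⊗[k] Polynomial k)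
    (Δ₃ : M₃ →ₗ[k] M₃ ⊗[k] Polynomial k)
    (h₁counit : IsCounital Δ₁) (h₁coassoc : IsCoassoc Δ₁)
    (h₂counit : IsCounital Δ₂) (h₂coassoc : IsCoassoc Δ₂)
    (h₃counit : IsCounital Δ₃) (h₃coassoc : IsCoassoc Δ₃)
    (i : M₁ →ₗ[k] M₂) (q : M₂ →ₗ[k] M₃)
    (hinj : Function.Injective i) (hsurj : Function.Surjective q)
    (hexact : LinearMap.range i = LinearMap.ker q)
    (hicomod : LinearMap.rTensor (Polynomial k) i ∘ₗ Δ₁ = Δ₂ ∘ₗ i)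
    (hqcomod : LinearMap.rTensor (Polynomial k) q ∘ₗ Δ₂ = Δ₃ ∘ₗ q)
    (a : ℕ →₀ k)
    (u₁ : M₁ →ₗ[k] M₁) (hu₁ : u₁ = ∑ s ∈ a.support, a s ^ p ^ s • uAct Δ₁ p s)
    (u₂ : M₂ →ₗ[k] M₂) (hu₂ : u₂ = ∑ s ∈ a.support, a s ^ p ^ s • uAct Δ₂ p s)
    (u₃ : M₃ →ₗ[k] M₃) (hu₃ : u₃ = ∑ s ∈ a.support, a s ^ p ^ s • uAct Δ₃ p s) :
    (IsFreeOp k p u₁ → IsFreeOp k p u₂ → IsFreeOp k p u₃) ∧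
      (IsFreeOp k p u₁ → IsFreeOp k p u₃ → IsFreeOp k p u₂) ∧
      (IsFreeOp k p u₂ → IsFreeOp k p u₃ → IsFreeOp k p u₁) := by
  have hp2 := (Fact.out : p.Prime).two_le
  have hp1 : p - (p-1) = 1 := by omega
  have hc21 : ∀ x, u₂ (i x) = i (u₁ x) := by
    intro x
    rw [hu₂, hu₁]
    exact opSum_intertwine Δ₁ Δ₂ i hicomod a x
  have hc32 : ∀ y, u₃ (q y) = q (u₂ y) := by
    intro y
    rw [hu₃, hu₂]
    exact opSum_intertwine Δ₂ Δ₃ q hqcomod a y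
  have hpow21 : ∀ (j:ℕ) x, (u₂^j) (i x) = i ((u₁^j) x) := pow_intertwine i u₁ u₂ hc21
  have hpow32 : ∀ (j:ℕ) y, (u₃^j) (q y) = q ((u₂^j) y) := pow_intertwine q u₂ u₃ hc32
  have hinj0 : ∀ x : M₁, i x = 0 → x = 0 := by
    intro x hx
    apply hinj
    rw [hx, map_zero]
  have h2p : u₂^p = 0 := by
    rw [hu₂]
    exact uSum_pow_zero Δ₂ h₂coassoc a
  refine ⟨?_, ?_, ?_⟩
  · -- M₁, M₂ free ⇒ M₃
    intro hf₁ hf₂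
    have h3p : u₃^p = 0 := by
      apply LinearMap.ext
      intro z
      obtain ⟨y, rfl⟩ := hsurj z
      rw [hpow32, freeOp_pow_zero hf₂]
      simp
    apply isFreeOp_of_ker_le_range h3p
    intro x hx
    rw [LinearMap.mem_ker] at hx
    obtain ⟨y, rfl⟩ := hsurj x
    have h1 : u₂ y ∈ LinearMap.range i := by
      rw [hexact, LinearMap.mem_ker, ← hc32, hx]
    obtain ⟨z, hz⟩ := h1
    have h2 : (u₁^(p-1)) z = 0 := by
      apply hinj0
      rw [← hpow21, hz, ← Module.End.mul_apply, ← pow_succ]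
      have : (p - 1) + 1 = p := by omega
      rw [this, freeOp_pow_zero hf₂]
      rfl
    have h3 : z ∈ LinearMap.range u₁ := by
      have h4 := freeOp_ker_range hf₁ (p-1) (by omega)
      rw [hp1, pow_one] at h4
      rw [← h4, LinearMap.mem_ker]
      exact h2
    obtain ⟨w, hw⟩ := h3
    have h5 : y - i w ∈ LinearMap.range (u₂^(p-1)) := by
      have h6 := freeOp_ker_range hf₂ 1 (by omega)
      rw [pow_one] at h6
      rw [← h6, LinearMap.mem_ker, map_sub, ← hz, ← hw, hc21, sub_self]
    obtain ⟨v, hv⟩ := h5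
    refine ⟨q v, ?_⟩
    rw [hpow32, hv, map_sub]
    have h7 : q (i w) = 0 := by
      rw [← LinearMap.mem_ker, ← hexact]
      exact ⟨w, rfl⟩
    rw [h7, sub_zero]
  · -- M₁, M₃ free ⇒ M₂
    intro hf₁ hf₃
    apply isFreeOp_of_ker_le_range h2p
    intro x hx
    rw [LinearMap.mem_ker] at hx
    have h1 : q x ∈ LinearMap.range (u₃^(p-1)) := by
      have h6 := freeOp_ker_range hf₃ 1 (by omega)
      rw [pow_one] at h6
      rw [← h6, LinearMap.mem_ker, hc32, hx, map_zero]
    obtain ⟨t, ht⟩ := h1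
    obtain ⟨y, rfl⟩ := hsurj t
    have h2 : x - (u₂^(p-1)) y ∈ LinearMap.range i := by
      rw [hexact, LinearMap.mem_ker, map_sub, ← hpow32, ht, sub_self]
    obtain ⟨z, hz⟩ := h2
    have h3 : u₁ z = 0 := by
      apply hinj0
      rw [← hc21, hz, map_sub, hx, ← Module.End.mul_apply, ← pow_succ']
      have hpp : (p - 1) + 1 = p := by omega
      rw [hpp, h2p]
      simp
    have h4 : z ∈ LinearMap.range (u₁^(p-1)) := by
      have h6 := freeOp_ker_range hf₁ 1 (by omega)
      rw [pow_one] at h6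
      rw [← h6, LinearMap.mem_ker]
      exact h3
    obtain ⟨w, hw⟩ := h4
    refine ⟨y + i w, ?_⟩
    rw [map_add, hpow21, hw, hz]
    abel
  · -- M₂, M₃ free ⇒ M₁
    intro hf₂ hf₃
    have h1p : u₁^p = 0 := by
      apply LinearMap.ext
      intro x
      apply hinj0
      rw [← hpow21, freeOp_pow_zero hf₂]
      simp
    apply isFreeOp_of_ker_le_range h1p
    intro x hx
    rw [LinearMap.mem_ker] at hx
    have h1 : i x ∈ LinearMap.range (u₂^(p-1)) := by
      have h6 := freeOp_ker_range hf₂ 1 (by omega)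
      rw [pow_one] at h6
      rw [← h6, LinearMap.mem_ker, hc21, hx, map_zero]
    obtain ⟨y, hy⟩ := h1
    have h2 : q y ∈ LinearMap.range u₃ := by
      have h4 := freeOp_ker_range hf₃ (p-1) (by omega)
      rw [hp1, pow_one] at h4
      rw [← h4, LinearMap.mem_ker, hpow32, hy]
      rw [← LinearMap.mem_ker, ← hexact]
      exact ⟨x, rfl⟩
    obtain ⟨t, ht⟩ := h2
    obtain ⟨w, rfl⟩ := hsurj t
    have h3 : y - u₂ w ∈ LinearMap.range i := by
      rw [hexact, LinearMap.mem_ker, map_sub, ← hc32, ht, sub_self]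
    obtain ⟨z, hz⟩ := h3
    refine ⟨z, ?_⟩
    apply hinj
    rw [← hpow21, hz, map_sub, hy]
    have h5 : (u₂^(p-1)) (u₂ w) = 0 := by
      rw [← Module.End.mul_apply, ← pow_succ]
      have hpp : (p - 1) + 1 = p := by omega
      rw [hpp, freeOp_pow_zero hf₂]
      rfl
    rw [h5, sub_zero]
end
end
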